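/- Let G be an additive abelian group, m, n ≥ 2, A an m×n partial matrix over G, B an (m−1)×(n−1) matrix over G, and B̃ any m×n matrix over G with σ₋(B̃) = B. Then A is consistent with B (i.e., A has a completion C with σ₋(C) = B) if and only if the partial matrix A − B̃ is cycle-balanced. -/

import Mathlib

/-
Subtracting `B̃` reduces everything to `B = 0`: `A` is consistent with `σ₋(B̃)` iff `A − B̃` has a
completion with vanishing balanced collapsing sum, and the matrices with `σ₋ = 0` are exactly the
outer sums `u i + v j`. Outer sums telescope around every cycle, so a partial matrix with such a
completion is cycle-balanced. Conversely, add the specified entries of a cycle-balanced matrix one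
at a time, keeping a potential `(u, v)`. If the new entry `(i₀, j₀)` joins two components of `H_A`,
shift the potential on the component of `y_{j₀}`; otherwise a path from `x_{i₀}` to `y_{j₀}` in
`H_A` closes up with the new entry to a cycle, whose balance forces the entry to be `u i₀ + v j₀`.
-/

/-- The balanced collapsing sum of an `(m+1) × (n+1)` matrix. -/
def bcs {G : Type*} [AddCommGroup G] {m n : ℕ}
    (A : Matrix (Fin (m + 1)) (Fin (n + 1)) G) : Matrix (Fin m) (Fin n) G :=
  fun i j => A i.castSucc j.castSucc - A i.succ j.castSucc
    - A i.castSucc j.succ + A i.succ j.succ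

/-- `C` is a completion of the partial matrix `A` (blank entries are `none`). -/
def IsCompletion {G : Type*} {m n : ℕ} (A : Matrix (Fin m) (Fin n) (Option G))
    (C : Matrix (Fin m) (Fin n) G) : Prop :=
  ∀ i j, A i j ≠ none → A i j = some (C i j)

/-- The partial matrix `A − B`: entrywise difference on specified entries, blank otherwise. -/
def psub {G : Type*} [AddCommGroup G] {m n : ℕ} (A : Matrix (Fin m) (Fin n) (Option G))
    (B : Matrix (Fin m) (Fin n) G) : Matrix (Fin m) (Fin n) (Option G) :=
  fun i j => (A i j).map (fun g => g - B i j)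

/-- `(i, j)` describes a cycle in the partial matrix `A`: writing the index sequence
`(i 0, j 0, i 1, j 1, …, i k, j k, i 0)` (addition of indices is modulo `k + 1`),
the corresponding closed walk in the bipartite graph `H_A` uses only edges of `H_A`
and does not repeat edges. -/
def IsCycleIn {G : Type*} {m n : ℕ} (A : Matrix (Fin m) (Fin n) (Option G))
    {k : ℕ} (i : Fin (k + 1) → Fin m) (j : Fin (k + 1) → Fin n) : Prop :=
  (∀ r, A (i r) (j r) ≠ none) ∧
  (∀ r, A (i (r + 1)) (j r) ≠ none) ∧
  Function.Injective (fun p : Fin (k + 1) × Bool =>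
    if p.2 then (i p.1, j p.1) else (i (p.1 + 1), j p.1))

/-- The cycle `(i, j)` in `A` is balanced: `Σ_r (a_{i_r, j_r} − a_{i_{r+1}, j_r}) = 0`. -/
def IsBalancedCycle {G : Type*} [AddCommGroup G] {m n : ℕ}
    (A : Matrix (Fin m) (Fin n) (Option G))
    {k : ℕ} (i : Fin (k + 1) → Fin m) (j : Fin (k + 1) → Fin n) : Prop :=
  ∑ r : Fin (k + 1), ((A (i r) (j r)).getD 0 - (A (i (r + 1)) (j r)).getD 0) = 0

/-- A partial matrix is cycle-balanced if every cycle in it is balanced. -/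
def CycleBalanced {G : Type*} [AddCommGroup G] {m n : ℕ}
    (A : Matrix (Fin m) (Fin n) (Option G)) : Prop :=
  ∀ (k : ℕ) (i : Fin (k + 1) → Fin m) (j : Fin (k + 1) → Fin n),
    IsCycleIn A i j → IsBalancedCycle A i j

open Function

theorem Fin.apply_eq_apply_zero_of_succ {α : Type*} {n : ℕ} {f : Fin (n + 1) → α}
    (h : ∀ i : Fin n, f i.succ = f i.castSucc) (i : Fin (n + 1)) : f i = f 0 := by
  induction i using Fin.induction with
  | zero => rfl
  | succ i ih => rw [h, ← ih]

section AddCommGroup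

variable {G : Type*} [AddCommGroup G] {m n : ℕ}

def outerSum (u : Fin m → G) (v : Fin n → G) : Matrix (Fin m) (Fin n) G :=
  Matrix.of fun i j => u i + v j

theorem bcs_add (C D : Matrix (Fin (m + 1)) (Fin (n + 1)) G) :
    bcs (C + D) = bcs C + bcs D := by
  ext i j
  simp only [bcs, Matrix.add_apply]
  abel

theorem bcs_sub (C D : Matrix (Fin (m + 1)) (Fin (n + 1)) G) :
    bcs (C - D) = bcs C - bcs D := by
  ext i j
  simp only [bcs, Matrix.sub_apply]
  abel

theorem bcs_eq_zero_iff {D : Matrix (Fin (m + 1)) (Fin (n + 1)) G} :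
    bcs D = 0 ↔ ∃ u v, D = outerSum u v := by
  constructor
  · intro h
    have hsquare : ∀ (i : Fin m) (j : Fin n), D i.succ j.succ - D i.succ j.castSucc
        = D i.castSucc j.succ - D i.castSucc j.castSucc := fun i j => by
      have hij : bcs D i j = 0 := by rw [h, Matrix.zero_apply]
      rw [← sub_eq_zero, ← hij, bcs]
      abel
    have hcol : ∀ i (j : Fin n), D i j.succ - D i j.castSucc = D 0 j.succ - D 0 j.castSucc :=
      fun i j => Fin.apply_eq_apply_zero_of_succ (f := fun i => D i j.succ - D i j.castSucc)
        (fun i => hsquare i j) i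
    have hrow : ∀ i j, D i j - D 0 j = D i 0 - D 0 0 := fun i =>
      Fin.apply_eq_apply_zero_of_succ (f := fun j => D i j - D 0 j) fun j => by
        rw [sub_eq_sub_iff_sub_eq_sub, hcol]
    refine ⟨fun i => D i 0 - D 0 0, fun j => D 0 j, ?_⟩
    ext i j
    exact sub_eq_iff_eq_add.mp (hrow i j)
  · rintro ⟨u, v, rfl⟩
    ext i j
    simp only [bcs, outerSum, Matrix.of_apply, Matrix.zero_apply]
    abel

theorem isCompletion_psub_sub_iff {A : Matrix (Fin m) (Fin n) (Option G)}
    {B C : Matrix (Fin m) (Fin n) G} : IsCompletion (psub A B) (C - B) ↔ IsCompletion A C := by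
  refine forall₂_congr fun i j => ?_
  simp only [psub, Matrix.sub_apply]
  cases A i j <;> simp

theorem exists_completion_bcs_eq_iff {A : Matrix (Fin (m + 1)) (Fin (n + 1)) (Option G)}
    {B : Matrix (Fin (m + 1)) (Fin (n + 1)) G} :
    (∃ C, IsCompletion A C ∧ bcs C = bcs B) ↔
      ∃ u v, IsCompletion (psub A B) (outerSum u v) := by
  constructor
  · rintro ⟨C, hC, hCB⟩
    obtain ⟨u, v, huv⟩ :=
      bcs_eq_zero_iff.mp (show bcs (C - B) = 0 by rw [bcs_sub, hCB, sub_self])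
    exact ⟨u, v, huv ▸ isCompletion_psub_sub_iff.mpr hC⟩
  · rintro ⟨u, v, h⟩
    refine ⟨outerSum u v + B, isCompletion_psub_sub_iff.mp (by rwa [add_sub_cancel_right]), ?_⟩
    rw [bcs_add, bcs_eq_zero_iff.mpr ⟨u, v, rfl⟩, zero_add]

theorem IsCompletion.getD_eq {M : Matrix (Fin m) (Fin n) (Option G)}
    {C : Matrix (Fin m) (Fin n) G} (hC : IsCompletion M C) {i : Fin m} {j : Fin n}
    (h : M i j ≠ none) : (M i j).getD 0 = C i j := by
  rw [hC i j h, Option.getD_some]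

theorem sum_outerSum_cycle_eq_zero (u : Fin m → G) (v : Fin n → G) {k : ℕ}
    (i : Fin (k + 1) → Fin m) (j : Fin (k + 1) → Fin n) :
    ∑ r, (outerSum u v (i r) (j r) - outerSum u v (i (r + 1)) (j r)) = 0 := by
  simp only [outerSum, Matrix.of_apply, add_sub_add_right_eq_sub, Finset.sum_sub_distrib]
  rw [sub_eq_zero]
  exact (Equiv.sum_comp (Equiv.addRight (1 : Fin (k + 1))) fun r => u (i r)).symm

theorem cycleBalanced_of_isCompletion_outerSum {M : Matrix (Fin m) (Fin n) (Option G)}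
    {u : Fin m → G} {v : Fin n → G} (h : IsCompletion M (outerSum u v)) : CycleBalanced M := by
  rintro k i j ⟨hdiag, hnext, -⟩
  refine (Finset.sum_congr rfl fun r _ => ?_).trans (sum_outerSum_cycle_eq_zero u v i j)
  rw [h.getD_eq (hdiag r), h.getD_eq (hnext r)]

theorem CycleBalanced.mono {M M' : Matrix (Fin m) (Fin n) (Option G)} (hM : CycleBalanced M)
    (h : ∀ i j, M' i j ≠ none → M' i j = M i j) : CycleBalanced M' := by
  rintro k i j ⟨hdiag, hnext, hinj⟩
  have hbal := hM k i j
    ⟨fun r => h _ _ (hdiag r) ▸ hdiag r, fun r => h _ _ (hnext r) ▸ hnext r, hinj⟩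
  rw [IsBalancedCycle] at hbal ⊢
  rwa [Finset.sum_congr rfl fun r _ => by rw [h _ _ (hdiag r), h _ _ (hnext r)]]

end AddCommGroup

section Graph

variable {G : Type*} {m n : ℕ}

theorem isCycleIn_of_injective {M : Matrix (Fin m) (Fin n) (Option G)} {k : ℕ}
    {i : Fin (k + 2) → Fin m} {j : Fin (k + 2) → Fin n} (hi : Injective i) (hj : Injective j)
    (hdiag : ∀ r, M (i r) (j r) ≠ none) (hnext : ∀ r, M (i (r + 1)) (j r) ≠ none) :
    IsCycleIn M i j := by
  refine ⟨hdiag, hnext, ?_⟩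
  have hsucc : ∀ r : Fin (k + 2), r + 1 ≠ r := fun r h => by simp at h
  rintro ⟨r, _ | _⟩ ⟨s, _ | _⟩ h <;>
    obtain ⟨hi', hj'⟩ := Prod.mk.inj h <;> obtain rfl := hj hj'
  · rfl
  · exact absurd (hi hi') (hsucc r)
  · exact absurd (hi hi').symm (hsucc r)
  · rfl

/-- The bipartite graph `H_M`, with `Sum.inl i` for `x_i` and `Sum.inr j` for `y_j`. -/
def supportGraph (M : Matrix (Fin m) (Fin n) (Option G)) : SimpleGraph (Fin m ⊕ Fin n) where
  Adj
    | .inl i, .inr j | .inr j, .inl i => M i j ≠ none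
    | _, _ => False
  symm := ⟨by rintro (a | a) (b | b) h <;> exact h⟩
  loopless := ⟨by rintro (a | a) h <;> exact h⟩

/-- The path `x_{p 0}, y_{q 0}, x_{p 1}, y_{q 1}, …, x_{p k}, y_{q k}` in `H_M`. -/
structure IsAltPath (M : Matrix (Fin m) (Fin n) (Option G)) {k : ℕ}
    (p : Fin (k + 1) → Fin m) (q : Fin (k + 1) → Fin n) : Prop where
  injective_left : Injective p
  injective_right : Injective q
  ne_none : ∀ r, M (p r) (q r) ≠ none
  ne_none_succ : ∀ r : Fin k, M (p r.succ) (q r.castSucc) ≠ none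

theorem exists_isAltPath {M : Matrix (Fin m) (Fin n) (Option G)} {i : Fin m} {j : Fin n}
    (w : (supportGraph M).Walk (.inl i) (.inr j)) (hw : w.IsPath) :
    ∃ (k : ℕ) (p : Fin (k + 1) → Fin m) (q : Fin (k + 1) → Fin n), IsAltPath M p q ∧
      p 0 = i ∧ q (Fin.last k) = j ∧ ∀ r, .inl (p r) ∈ w.support ∧ .inr (q r) ∈ w.support := by
  match w, hw with
  | .cons h .nil, _ =>
    exact ⟨0, fun _ => i, fun _ => j, ⟨fun a b _ => Subsingleton.elim (α := Fin 1) a b,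
      fun a b _ => Subsingleton.elim (α := Fin 1) a b, fun _ => h, Fin.elim0⟩, rfl, rfl,
      fun _ => by simp⟩
  | .cons (v := .inr j') h (.cons (v := .inl i') h' w), hw =>
    obtain ⟨⟨hw, hj'⟩, hi⟩ := by simpa only [SimpleGraph.Walk.cons_isPath_iff] using hw
    obtain ⟨k, p, q, hpq, hp0, hqk, hsupp⟩ := exists_isAltPath w hw
    refine ⟨k + 1, Fin.cons i p, Fin.cons j' q, ⟨?_, ?_, ?_, ?_⟩, rfl, hqk, ?_⟩
    · refine Fin.cons_injective_iff.mpr ⟨?_, hpq.injective_left⟩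
      rintro ⟨r, rfl⟩
      exact hi (by simp [(hsupp r).1])
    · refine Fin.cons_injective_iff.mpr ⟨?_, hpq.injective_right⟩
      rintro ⟨r, rfl⟩
      exact hj' (hsupp r).2
    · refine Fin.cases ?_ fun r => ?_
      · exact h
      · simpa using hpq.ne_none r
    · refine Fin.cases ?_ fun r => ?_
      · simpa [hp0] using show M i' j' ≠ none from h'
      · simpa [← Fin.succ_castSucc] using hpq.ne_none_succ r
    · refine Fin.cases ?_ fun r => ?_
      · simp
      · simp [hsupp r]
termination_by w.length

theorem IsCompletion.of_eq_except {M M' : Matrix (Fin m) (Fin n) (Option G)}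
    {C : Matrix (Fin m) (Fin n) G} {i₀ : Fin m} {j₀ : Fin n} (h : IsCompletion M' C)
    (hM : ∀ i j, (i, j) ≠ (i₀, j₀) → M i j = M' i j)
    (h₀ : M i₀ j₀ ≠ none → M i₀ j₀ = some (C i₀ j₀)) : IsCompletion M C := by
  intro i j hij
  by_cases hij₀ : (i, j) = (i₀, j₀)
  · obtain ⟨rfl, rfl⟩ := Prod.mk.inj hij₀
    exact h₀ hij
  · rw [hM i j hij₀] at hij ⊢
    exact h i j hij

end Graph

section Potential

variable {G : Type*} [AddCommGroup G] {m n : ℕ} {M M' : Matrix (Fin m) (Fin n) (Option G)}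
  {u : Fin m → G} {v : Fin n → G} {i₀ : Fin m} {j₀ : Fin n}

theorem IsCompletion.exists_outerSum_of_not_reachable (h : IsCompletion M' (outerSum u v))
    (hM : ∀ i j, (i, j) ≠ (i₀, j₀) → M i j = M' i j)
    (hreach : ¬(supportGraph M').Reachable (.inl i₀) (.inr j₀)) :
    ∃ u v, IsCompletion M (outerSum u v) := by
  classical
  set R := (supportGraph M').Reachable
  set c := (M i₀ j₀).getD 0 - u i₀ - v j₀
  refine ⟨fun i => if R (.inl i) (.inr j₀) then u i - c else u i,
    fun j => if R (.inr j) (.inr j₀) then v j + c else v j, IsCompletion.of_eq_except ?_ hM ?_⟩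
  · intro i j hij
    have hadj : (supportGraph M').Adj (.inl i) (.inr j) := hij
    have hiff : R (.inl i) (.inr j₀) ↔ R (.inr j) (.inr j₀) :=
      ⟨hadj.symm.reachable.trans, hadj.reachable.trans⟩
    rw [h i j hij]
    simp only [outerSum, Matrix.of_apply, hiff]
    split_ifs <;> simp only [sub_add_add_cancel]
  · intro hne
    obtain ⟨g, hg⟩ := Option.ne_none_iff_exists'.mp hne
    simp only [outerSum, Matrix.of_apply, R, hreach, if_false, SimpleGraph.Reachable.refl,
      if_true, c, hg, Option.getD_some]
    congr 1
    abel

theorem IsCompletion.eq_some_of_reachable (h : IsCompletion M' (outerSum u v))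
    (hM : CycleBalanced M) (hoff : ∀ i j, (i, j) ≠ (i₀, j₀) → M i j = M' i j)
    (h₀ : M' i₀ j₀ = none) (hne : M i₀ j₀ ≠ none)
    (hreach : (supportGraph M').Reachable (.inl i₀) (.inr j₀)) :
    M i₀ j₀ = some (outerSum u v i₀ j₀) := by
  have hsub : ∀ i j, M' i j ≠ none → M i j = M' i j := fun i j hij =>
    hoff i j fun hij₀ => hij (by obtain ⟨rfl, rfl⟩ := Prod.mk.inj hij₀; exact h₀)
  obtain ⟨g, hg⟩ := Option.ne_none_iff_exists'.mp hne
  obtain ⟨w, hw⟩ := hreach.exists_isPath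
  obtain ⟨k, p, q, hpq, hp0, hqk, -⟩ := exists_isAltPath w hw
  have hval : ∀ i j, M' i j ≠ none → (M i j).getD 0 = outerSum u v i j := fun i j hij => by
    rw [hsub i j hij, h.getD_eq hij]
  cases k with
  | zero => exact absurd (hp0 ▸ hqk ▸ hpq.ne_none 0) (not_not.mpr h₀)
  | succ k =>
    have hnext : ∀ s : Fin (k + 1), p (s.castSucc + 1) = p s.succ := fun s => by
      rw [Fin.coeSucc_eq_succ]
    have hcycle : IsCycleIn M p q := by
      refine isCycleIn_of_injective hpq.injective_left hpq.injective_right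
        (fun r => hsub _ _ (hpq.ne_none r) ▸ hpq.ne_none r) (Fin.lastCases ?_ fun s => ?_)
      · rw [Fin.last_add_one, hp0, hqk]
        exact hne
      · rw [hnext, hsub _ _ (hpq.ne_none_succ s)]
        exact hpq.ne_none_succ s
    have hbal := hM _ p q hcycle
    have htel := sum_outerSum_cycle_eq_zero u v p q
    rw [IsBalancedCycle, Fin.sum_univ_castSucc] at hbal
    rw [Fin.sum_univ_castSucc] at htel
    have hcast : ∀ s : Fin (k + 1),
        (M (p s.castSucc) (q s.castSucc)).getD 0 - (M (p (s.castSucc + 1)) (q s.castSucc)).getD 0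
          = outerSum u v (p s.castSucc) (q s.castSucc)
            - outerSum u v (p (s.castSucc + 1)) (q s.castSucc) := fun s => by
      rw [hval _ _ (hpq.ne_none _), hnext, hval _ _ (hpq.ne_none_succ s)]
    rw [Finset.sum_congr rfl fun s _ => hcast s, Fin.last_add_one, hp0, hqk,
      hval _ _ (hqk ▸ hpq.ne_none _), hg, Option.getD_some] at hbal
    rw [Fin.last_add_one, hp0, hqk] at htel
    rw [hg, sub_right_inj.mp ((add_right_inj _).mp (hbal.trans htel.symm))]

theorem IsCompletion.exists_outerSum_of_eq_except (h : IsCompletion M' (outerSum u v))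
    (hM : CycleBalanced M) (hoff : ∀ i j, (i, j) ≠ (i₀, j₀) → M i j = M' i j)
    (h₀ : M' i₀ j₀ = none) : ∃ u v, IsCompletion M (outerSum u v) := by
  by_cases hreach : (supportGraph M').Reachable (.inl i₀) (.inr j₀)
  · exact ⟨u, v, h.of_eq_except hoff fun hne => h.eq_some_of_reachable hM hoff h₀ hne hreach⟩
  · exact h.exists_outerSum_of_not_reachable hoff hreach

theorem CycleBalanced.exists_isCompletion_outerSum (hM : CycleBalanced M) :
    ∃ u v, IsCompletion M (outerSum u v) := by
  classical
  let restrict (S : Finset (Fin m × Fin n)) : Matrix (Fin m) (Fin n) (Option G) :=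
    fun i j => if (i, j) ∈ S then M i j else none
  suffices ∀ S, ∃ u v, IsCompletion (restrict S) (outerSum u v) by
    simpa [restrict] using this Finset.univ
  intro S
  induction S using Finset.induction_on with
  | empty => exact ⟨0, 0, fun i j h => absurd (by simp [restrict]) h⟩
  | insert x S hx ih =>
    obtain ⟨u, v, h⟩ := ih
    obtain ⟨i₀, j₀⟩ := x
    refine h.exists_outerSum_of_eq_except (i₀ := i₀) (j₀ := j₀)
      (hM.mono fun i j hij => ?_) (fun i j hij => ?_) ?_
    · simp only [restrict] at hij ⊢
      split_ifs at hij ⊢ <;> trivial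
    · simp only [restrict, Finset.mem_insert, hij, false_or]
    · simp [restrict, hx]

theorem cycleBalanced_iff_exists_isCompletion_outerSum :
    CycleBalanced M ↔ ∃ u v, IsCompletion M (outerSum u v) :=
  ⟨CycleBalanced.exists_isCompletion_outerSum,
    fun ⟨_, _, h⟩ => cycleBalanced_of_isCompletion_outerSum h⟩

end Potential

theorem stmt13 {G : Type*} [AddCommGroup G] {m n : ℕ}
    (A : Matrix (Fin (m + 1)) (Fin (n + 1)) (Option G))
    (B : Matrix (Fin m) (Fin n) G)
    (Bt : Matrix (Fin (m + 1)) (Fin (n + 1)) G) (hBt : bcs Bt = B) :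
    (∃ C, IsCompletion A C ∧ bcs C = B) ↔ CycleBalanced (psub A Bt) := by
  subst hBt
  rw [exists_completion_bcs_eq_iff, cycleBalanced_iff_exists_isCompletion_outerSum]
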